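/- arXiv:math/0511036 — 3 statements merged into one kernel-verified Lean document; each statement's English description precedes it below -/
import Mathlib

section
/- For every integer i ≥ 2, every 0 < ε < 1, and all reals x, y with 0 < y ≤ x ≤ 1 − ε, one has ∫_x^{x+ε} (i−1)·(log(t/y))^{i−2} / (t·(log(1/y))^{i−1}) dt > ( ε / (2·max(1, log(1/y))) )^i. -/
/-!
The integrand is the derivative of `t ↦ (log (t / y) / log (1 / y)) ^ (i - 1)`, so with
`a = log (x / y)` and `b = log ((x + ε) / y)` the integral equals `(b ^ (i-1) - a ^ (i-1)) / L ^ (i-1)`,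
where `L = log (1 / y)`. Superadditivity of `s ↦ s ^ (i - 1)` on `[0, ∞)` bounds this below by
`((b - a) / L) ^ (i - 1)`, and `b - a = log (1 + ε / x) ≥ log (1 + ε) ≥ ε / 2` because `x ≤ 1`.
Finally `r = ε / (2 max 1 L)` lies in `(0, 1)`, so `r ^ i < r ^ (i - 1) ≤ ((b - a) / L) ^ (i - 1)`.
-/

open Real

theorem sub_pow_le_pow_sub_pow {R : Type*} [Ring R] [PartialOrder R] [IsOrderedRing R]
    {a b : R} {n : ℕ} (ha : 0 ≤ a) (hab : a ≤ b) (hn : n ≠ 0) :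
    (b - a) ^ n ≤ b ^ n - a ^ n := by
  have h := pow_add_pow_le ha (sub_nonneg.2 hab) hn
  rw [add_sub_cancel] at h
  exact le_sub_iff_add_le'.2 h

theorem half_le_log_one_add {ε : ℝ} (h0 : 0 ≤ ε) (h2 : ε ≤ 2) : ε / 2 ≤ log (1 + ε) := by
  refine le_trans ?_ (le_log_one_add_of_nonneg h0)
  rw [div_le_div_iff₀ two_pos (by linarith)]
  nlinarith

theorem half_le_log_add_sub_log {x ε : ℝ} (hx0 : 0 < x) (hx1 : x ≤ 1) (h0 : 0 ≤ ε) (h2 : ε ≤ 2) :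
    ε / 2 ≤ log (x + ε) - log x := by
  rw [← log_div (by positivity) hx0.ne']
  refine (half_le_log_one_add h0 h2).trans (log_le_log (by positivity) ?_)
  rw [le_div_iff₀ hx0]
  nlinarith

theorem hasDerivAt_log_div_pow_succ (n : ℕ) {t y : ℝ} (ht : t ≠ 0) (hy : y ≠ 0) :
    HasDerivAt (fun s => log (s / y) ^ (n + 1)) (((n : ℝ) + 1) * log (t / y) ^ n / t) t := by
  have hlog : HasDerivAt (fun s => log (s / y)) (1 / y / (t / y)) t :=
    ((hasDerivAt_id' t).div_const y).log (div_ne_zero ht hy)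
  refine (hlog.fun_pow (n + 1)).congr_deriv ?_
  rw [Nat.add_sub_cancel]
  field_simp
  push_cast
  ring

theorem integral_succ_mul_log_div_pow_div_self (n : ℕ) {x z y : ℝ} (hx : 0 < x) (hz : 0 < z)
    (hy : y ≠ 0) :
    ∫ t in x..z, ((n : ℝ) + 1) * log (t / y) ^ n / t =
      log (z / y) ^ (n + 1) - log (x / y) ^ (n + 1) := by
  have hpos : ∀ t ∈ Set.uIcc x z, t ≠ 0 := fun t ht =>
    (lt_of_lt_of_le (lt_min hx hz) ht.1).ne'
  refine intervalIntegral.integral_eq_sub_of_hasDerivAt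
    (fun t ht => hasDerivAt_log_div_pow_succ n (hpos t ht) hy) (ContinuousOn.intervalIntegrable ?_)
  have hlog : ContinuousOn (fun t => log (t / y)) (Set.uIcc x z) :=
    (continuousOn_id.div_const y).log fun t ht => div_ne_zero (hpos t ht) hy
  exact (continuousOn_const.mul (hlog.pow n)).div continuousOn_id hpos

/-- Lemma (a calculus estimate): for `i ≥ 2`, `0 < ε < 1` and `0 < y ≤ x ≤ 1 − ε`,
`∫_x^{x+ε} (i−1) (log(t/y))^{i−2} / (t (log(1/y))^{i−1}) dt > (ε/(2 max(1, log(1/y))))^i`. -/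
theorem stmt8 (i : ℕ) (hi : 2 ≤ i) (ε x y : ℝ) (hε0 : 0 < ε) (hε1 : ε < 1)
    (hy : 0 < y) (hyx : y ≤ x) (hx : x ≤ 1 - ε) :
    (ε / (2 * max 1 (Real.log (1 / y)))) ^ i <
      ∫ t in x..(x + ε),
        ((i : ℝ) - 1) * (Real.log (t / y)) ^ (i - 2) / (t * (Real.log (1 / y)) ^ (i - 1)) := by
  obtain ⟨n, rfl⟩ : ∃ n, i = n + 2 := ⟨i - 2, by omega⟩
  have hx0 : 0 < x := hy.trans_le hyx
  set L := log (1 / y)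
  have hL : 0 < L := log_pos (by rw [lt_div_iff₀ hy]; linarith)
  set r := ε / (2 * max 1 L)
  have hM : 0 < max 1 L := lt_max_of_lt_left one_pos
  have hr0 : 0 < r := by positivity
  have hr1 : r < 1 := by
    rw [div_lt_one (by positivity)]
    linarith [le_max_left 1 L]
  set a := log (x / y)
  set b := log ((x + ε) / y)
  have ha : 0 ≤ a := log_nonneg ((one_le_div hy).2 hyx)
  have hab : ε / 2 ≤ b - a := by
    change ε / 2 ≤ log ((x + ε) / y) - log (x / y)
    rw [log_div (by positivity) hy.ne', log_div hx0.ne' hy.ne', sub_sub_sub_cancel_right]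
    exact half_le_log_add_sub_log hx0 (by linarith) hε0.le (by linarith)
  have hrL : r ≤ (b - a) / L := by
    rw [div_le_div_iff₀ (by positivity) hL]
    nlinarith [le_max_right 1 L]
  have hcast : ((n + 2 : ℕ) : ℝ) - 1 = n + 1 := by push_cast; ring
  rw [hcast, show n + 2 - 2 = n by omega, show n + 2 - 1 = n + 1 by omega,
    funext fun t => div_mul_eq_div_div _ t _, intervalIntegral.integral_div,
    integral_succ_mul_log_div_pow_div_self n hx0 (by positivity) hy.ne']
  calc r ^ (n + 2) < r ^ (n + 1) := pow_lt_pow_right_of_lt_one₀ hr0 hr1 (by omega)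
    _ ≤ ((b - a) / L) ^ (n + 1) := by gcongr
    _ ≤ (b ^ (n + 1) - a ^ (n + 1)) / L ^ (n + 1) := by
      rw [div_pow]
      gcongr
      exact sub_pow_le_pow_sub_pow ha (by linarith) n.succ_ne_zero
end

section
/- Let a < y_0 be reals and let h : [a, y_0] → ℝ be a bounded measurable function such that for every x ∈ [a, y_0), h(x) ≤ (1/(y_0 − x)) ∫_x^{y_0} h(s) ds. Then for all x, t with a ≤ x < t < y_0, h(x) ≤ (1/(y_0 − t)) ∫_t^{y_0} h(s) ds. -/
open MeasureTheory Set intervalIntegral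

/-!
Write `A u = (1 / (y₀ - u)) ∫_u^{y₀} h` for the tail average of `h`. It suffices to show that `A` is
nondecreasing on `[a, y₀)`, since then `h x ≤ A x ≤ A t`. Integrating `h ≤ A` over `[u, t]` gives
`(y₀ - u) G u ≤ ∫_u^t G` for the continuous function `G = A - A t`, and this integral inequality forces
`G ≤ 0` on `[a, t]`: the function `u ↦ (∫_u^t G) / (y₀ - u)` has nonnegative derivative and vanishes
at `t`.
-/

theorem nonpos_of_sub_mul_le_integral {G : ℝ → ℝ} {a b c : ℝ} (hbc : b < c)
    (hG : ContinuousOn G (Icc a b)) (hle : ∀ u ∈ Icc a b, (c - u) * G u ≤ ∫ s in u..b, G s) :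
    ∀ u ∈ Icc a b, G u ≤ 0 := by
  set Ψ : ℝ → ℝ := fun u => ∫ s in u..b, G s
  have hΨ_cont : ContinuousOn Ψ (Icc a b) := by
    intro u hu
    have hab : a ≤ b := hu.1.trans hu.2
    have := continuousOn_primitive_interval_left (μ := volume)
      (by rw [uIcc_of_le hab]; exact hG.integrableOn_Icc)
    rw [uIcc_of_le hab] at this
    exact this u hu
  have hΨ_deriv : ∀ u ∈ Ioo a b, HasDerivAt Ψ (-G u) u := fun u hu =>
    integral_hasDerivAt_left
      ((hG.mono (Icc_subset_Icc hu.1.le le_rfl)).intervalIntegrable_of_Icc hu.2.le)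
      (hG.mono Ioo_subset_Icc_self |>.stronglyMeasurableAtFilter isOpen_Ioo u hu)
      (hG.continuousAt (Icc_mem_nhds hu.1 hu.2))
  have hmono : MonotoneOn (fun u => Ψ u / (c - u)) (Icc a b) := by
    refine monotoneOn_of_hasDerivWithinAt_nonneg (convex_Icc a b)
      (f' := fun u => (-G u * (c - u) - Ψ u * -1) / (c - u) ^ 2)
      (hΨ_cont.div (continuousOn_const.sub continuousOn_id)
        fun u hu => (sub_pos.2 (hu.2.trans_lt hbc)).ne')
      (fun u hu => ?_) (fun u hu => ?_)
    · rw [interior_Icc] at hu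
      exact ((hΨ_deriv u hu).div ((hasDerivAt_id u).const_sub c)
        (sub_pos.2 (hu.2.trans hbc)).ne').hasDerivWithinAt
    · rw [interior_Icc] at hu
      have hcu : 0 < c - u := sub_pos.2 (hu.2.trans hbc)
      have := hle u (Ioo_subset_Icc_self hu)
      exact div_nonneg (by linarith) (by positivity)
  intro u hu
  have hcu : 0 < c - u := sub_pos.2 (hu.2.trans_lt hbc)
  have hΨu : Ψ u ≤ 0 := by
    have := hmono hu (right_mem_Icc.2 (hu.1.trans hu.2)) hu.2
    simp only [Ψ, integral_same, zero_div] at this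
    simpa using (div_le_iff₀ hcu).1 this
  exact nonpos_of_mul_nonpos_right ((hle u hu).trans hΨu) hcu

noncomputable def tailAverage (h : ℝ → ℝ) (b u : ℝ) : ℝ := (1 / (b - u)) * ∫ s in u..b, h s

section TailAverage

variable {h : ℝ → ℝ} {a b : ℝ}

theorem sub_mul_tailAverage {u : ℝ} (hu : u < b) :
    (b - u) * tailAverage h b u = ∫ s in u..b, h s := by
  rw [tailAverage, ← mul_assoc, mul_one_div_cancel (sub_pos.2 hu).ne', one_mul]

theorem continuousOn_tailAverage (hh : IntegrableOn h (Icc a b)) :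
    ContinuousOn (tailAverage h b) (Ico a b) := by
  rcases le_total a b with hab | hba
  · have hF := continuousOn_primitive_interval_left (μ := volume) (b := b)
      (by rwa [uIcc_of_le hab])
    rw [uIcc_of_le hab] at hF
    exact (continuousOn_const.div (continuousOn_const.sub continuousOn_id)
      fun u hu => (sub_pos.2 hu.2).ne').mul (hF.mono Ico_subset_Icc_self)
  · simp [Ico_eq_empty_of_le hba]

theorem monotoneOn_tailAverage (hh : IntegrableOn h (Icc a b))
    (hle : ∀ x ∈ Ico a b, h x ≤ tailAverage h b x) :
    MonotoneOn (tailAverage h b) (Ico a b) := by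
  intro x hx t ht hxt
  have hA := continuousOn_tailAverage hh
  have hsub : Icc x t ⊆ Ico a b := Icc_subset_Ico hx.1 ht.2
  suffices tailAverage h b x - tailAverage h b t ≤ 0 by linarith
  refine nonpos_of_sub_mul_le_integral (G := fun u => tailAverage h b u - tailAverage h b t) ht.2
    ((hA.mono hsub).sub continuousOn_const) (fun u hu => ?_) x (left_mem_Icc.2 hxt)
  have hint : ∀ v w, v ∈ Icc a b → w ∈ Icc a b → IntervalIntegrable h volume v w :=
    fun v w hv hw => (hh.mono_set (uIcc_subset_Icc hv hw)).intervalIntegrable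
  have hu' : u ∈ Icc a b := Ico_subset_Icc_self (hsub hu)
  have ht' : t ∈ Icc a b := Ico_subset_Icc_self ht
  have hAint : IntervalIntegrable (tailAverage h b) volume u t :=
    (hA.mono ((Icc_subset_Icc_left hu.1).trans hsub)).intervalIntegrable_of_Icc hu.2
  have hsplit := integral_add_adjacent_intervals (hint u t hu' ht')
    (hint t b ht' (right_mem_Icc.2 (hu'.1.trans hu'.2)))
  have hmono : ∫ s in u..t, h s ≤ ∫ s in u..t, tailAverage h b s :=
    integral_mono_on hu.2 (hint u t hu' ht') hAint
      fun s hs => hle s (hsub ⟨hu.1.trans hs.1, hs.2⟩)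
  have hu_avg := sub_mul_tailAverage (h := h) (hsub hu).2
  have ht_avg := sub_mul_tailAverage (h := h) ht.2
  rw [integral_sub hAint intervalIntegrable_const, intervalIntegral.integral_const, smul_eq_mul]
  linear_combination hu_avg - ht_avg - hsplit + hmono

end TailAverage

theorem stmt16_general (a y₀ : ℝ) (h : ℝ → ℝ) (hmeas : Measurable h)
    (hbdd : ∃ B : ℝ, ∀ x ∈ Set.Icc a y₀, |h x| ≤ B)
    (hyp : ∀ x ∈ Set.Ico a y₀, h x ≤ (1 / (y₀ - x)) * ∫ s in x..y₀, h s) :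
    ∀ x t : ℝ, a ≤ x → x < t → t < y₀ →
      h x ≤ (1 / (y₀ - t)) * ∫ s in t..y₀, h s := by
  obtain ⟨B, hB⟩ := hbdd
  have hh : IntegrableOn h (Icc a y₀) :=
    Measure.integrableOn_of_bounded (M := B) (by simp) hmeas.aestronglyMeasurable
      (by filter_upwards [ae_restrict_mem measurableSet_Icc] with s hs using
        (Real.norm_eq_abs _).trans_le (hB s hs))
  intro x t hax hxt hty
  calc h x ≤ tailAverage h y₀ x := hyp x ⟨hax, hxt.trans hty⟩
    _ ≤ tailAverage h y₀ t :=
      monotoneOn_tailAverage hh hyp ⟨hax, hxt.trans hty⟩ ⟨hax.trans hxt.le, hty⟩ hxt.le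

/-- Lemma: if a bounded measurable `h` satisfies `h(x) ≤ (1/(y₀−x)) ∫_x^{y₀} h` for every
`x ∈ [a, y₀)`, then `h(x) ≤ (1/(y₀−t)) ∫_t^{y₀} h` for all `a ≤ x < t < y₀`. -/
theorem stmt16 (a y₀ : ℝ) (hay : a < y₀) (h : ℝ → ℝ) (hmeas : Measurable h)
    (hbdd : ∃ B : ℝ, ∀ x ∈ Set.Icc a y₀, |h x| ≤ B)
    (hyp : ∀ x ∈ Set.Ico a y₀, h x ≤ (1 / (y₀ - x)) * ∫ s in x..y₀, h s) :
    ∀ x t : ℝ, a ≤ x → x < t → t < y₀ →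
      h x ≤ (1 / (y₀ - t)) * ∫ s in t..y₀, h s :=
  stmt16_general a y₀ h hmeas hbdd hyp
end

section
/- Let p be a Lebesgue-measurable function on {(x,y) : 0 ≤ x ≤ y ≤ 1} with values in [0,1] satisfying p(x,y) = (1/(y−x)) ∫_x^y p(x,t)·p(t,y) dt for all 0 ≤ x < y ≤ 1. Then p is decreasing in its second argument almost everywhere: for almost every triple (x,y,z) ∈ [0,1]³ with x ≤ y ≤ z, p(x,z) ≤ p(x,y). -/
/-!
Fix `0 ≤ x < z ≤ 1`. Computing the integral of `(s - x) ^ k p(x,s) p(s,t) p(t,z)` over the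
triangle `x < s ≤ t ≤ z` in both orders, using the integral equation for the inner integrals,
gives by induction on `k` that
`∫_x^z (y - x) ^ k p(x,y) p(y,z) dy = p(x,z) (z - x) ^ (k+1) / (k+1)`:
the function `y ↦ p(x,y) p(y,z)` has the same moments on `[x, z]` as the constant `p(x,z)`.
By Weierstrass approximation they agree almost everywhere, so `p(x,z) = p(x,y) p(y,z) ≤ p(x,y)`
for almost every `y`, and Fubini's theorem in `ℝ³` concludes.
-/

open MeasureTheory Set Function Polynomial

theorem intervalIntegral_intervalIntegral_swap_triangle {a b : ℝ} (hab : a ≤ b)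
    {f : ℝ → ℝ → ℝ}
    (hf : IntegrableOn (uncurry f) {q : ℝ × ℝ | a < q.1 ∧ q.1 ≤ q.2 ∧ q.2 ≤ b}) :
    ∫ t in a..b, ∫ s in a..t, f s t = ∫ s in a..b, ∫ t in s..b, f s t := by
  set T := {q : ℝ × ℝ | a < q.1 ∧ q.1 ≤ q.2 ∧ q.2 ≤ b}
  have hT : MeasurableSet T := by measurability
  have hF : Integrable (fun q : ℝ × ℝ ↦ T.indicator (uncurry f) q) (volume.prod volume) := by
    rw [← Measure.volume_eq_prod, integrable_indicator_iff hT]; exact hf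
  have hrow : ∀ s, ∫ t, T.indicator (uncurry f) (s, t) =
      (Ioc a b).indicator (fun s ↦ ∫ t in s..b, f s t) s := by
    intro s
    by_cases hs : s ∈ Ioc a b
    · have hsection : (fun t ↦ T.indicator (uncurry f) (s, t)) = (Icc s b).indicator (f s) := by
        ext t; simp [T, indicator_apply, hs.1]
      rw [hsection, integral_indicator measurableSet_Icc, integral_Icc_eq_integral_Ioc,
        ← intervalIntegral.integral_of_le hs.2, indicator_of_mem hs]
    · have hsection : (fun t ↦ T.indicator (uncurry f) (s, t)) = 0 := by
        ext t; simp [T, indicator_apply]; grind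
      rw [hsection, indicator_of_notMem hs, integral_zero']
  have hcol : ∀ t, ∫ s, T.indicator (uncurry f) (s, t) =
      (Ioc a b).indicator (fun t ↦ ∫ s in a..t, f s t) t := by
    intro t
    by_cases ht : t ∈ Ioc a b
    · have hsection : (fun s ↦ T.indicator (uncurry f) (s, t)) = (Ioc a t).indicator (f · t) := by
        ext s; simp [T, indicator_apply, ht.2, and_comm]
      rw [hsection, integral_indicator measurableSet_Ioc,
        ← intervalIntegral.integral_of_le ht.1.le, indicator_of_mem ht]
    · have hsection : (fun s ↦ T.indicator (uncurry f) (s, t)) = 0 := by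
        ext s; simp [T, indicator_apply]; grind
      rw [hsection, indicator_of_notMem ht, integral_zero']
  have hswap := integral_integral_swap (f := fun s t ↦ T.indicator (uncurry f) (s, t)) hF
  simp only [hrow, hcol, integral_indicator measurableSet_Ioc] at hswap
  rw [intervalIntegral.integral_of_le hab, intervalIntegral.integral_of_le hab, hswap]

theorem setIntegral_eval_mul_eq_zero_of_moments {f : ℝ → ℝ} {a b : ℝ}
    (hf : IntegrableOn f (Ioc a b))
    (hmom : ∀ n : ℕ, ∫ y in Ioc a b, (y - a) ^ n * f y = 0) (q : ℝ[X]) :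
    ∫ y in Ioc a b, q.eval y * f y = 0 := by
  set r := q.comp (X + C a)
  have hexpand : ∀ y, q.eval y * f y =
      ∑ n ∈ Finset.range (r.natDegree + 1), r.coeff n * ((y - a) ^ n * f y) := by
    intro y
    have hshift : q.eval y = r.eval (y - a) := by simp [r]
    rw [hshift, eval_eq_sum_range, Finset.sum_mul]
    exact Finset.sum_congr rfl fun n _ ↦ by ring
  simp_rw [hexpand]
  rw [integral_finsetSum]
  · simp [integral_const_mul, hmom]
  · exact fun n _ ↦ (hf.continuousOn_mul_of_subset (by fun_prop) isCompact_Icc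
      measurableSet_Ioc Ioc_subset_Icc_self).const_mul _

theorem setIntegral_mul_eq_zero_of_moments {f : ℝ → ℝ} {a b : ℝ}
    (hf : IntegrableOn f (Ioc a b))
    (hmom : ∀ n : ℕ, ∫ y in Ioc a b, (y - a) ^ n * f y = 0) {φ : ℝ → ℝ}
    (hφ : ContinuousOn φ (Icc a b)) :
    ∫ y in Ioc a b, φ y * f y = 0 := by
  set M := ∫ y in Ioc a b, |f y|
  refine eq_of_forall_dist_le fun ε hε ↦ ?_
  obtain ⟨q, hq⟩ := exists_polynomial_near_of_continuousOn a b φ hφ (ε / (M + 1))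
    (by positivity)
  have hint {ψ : ℝ → ℝ} (hψ : ContinuousOn ψ (Icc a b)) :
      IntegrableOn (fun y ↦ ψ y * f y) (Ioc a b) :=
    hf.continuousOn_mul_of_subset hψ isCompact_Icc measurableSet_Ioc Ioc_subset_Icc_self
  have hM : 0 ≤ M := integral_nonneg fun _ ↦ abs_nonneg _
  calc dist (∫ y in Ioc a b, φ y * f y) 0
      = |∫ y in Ioc a b, (φ y - q.eval y) * f y| := by
        simp_rw [sub_mul]
        rw [integral_sub (hint hφ) (hint q.continuous.continuousOn),
          setIntegral_eval_mul_eq_zero_of_moments hf hmom, sub_zero, Real.dist_eq, sub_zero]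
    _ ≤ ∫ y in Ioc a b, ε / (M + 1) * |f y| := by
        rw [← Real.norm_eq_abs]
        refine norm_integral_le_of_norm_le (hf.abs.const_mul _) ?_
        filter_upwards [ae_restrict_mem measurableSet_Ioc] with y hy
        rw [Real.norm_eq_abs, abs_mul, abs_sub_comm]
        exact mul_le_mul_of_nonneg_right (hq y (Ioc_subset_Icc_self hy)).le (abs_nonneg _)
    _ = ε * (M / (M + 1)) := by rw [integral_const_mul]; ring
    _ ≤ ε := mul_le_of_le_one_right hε.le ((div_le_one (by positivity)).2 (by linarith))

theorem ae_eq_zero_of_moments {f : ℝ → ℝ} {a b : ℝ} (hf : IntegrableOn f (Ioc a b))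
    (hmom : ∀ n : ℕ, ∫ y in Ioc a b, (y - a) ^ n * f y = 0) :
    ∀ᵐ y ∂volume.restrict (Ioc a b), f y = 0 :=
  ae_eq_zero_of_integral_contDiff_smul_eq_zero hf.locallyIntegrable fun _ hg _ ↦
    setIntegral_mul_eq_zero_of_moments hf hmom hg.continuous.continuousOn

section
variable {p : ℝ → ℝ → ℝ} (hmeas : Measurable (uncurry p))
  (hrange : ∀ x y : ℝ, 0 ≤ x → x ≤ y → y ≤ 1 → p x y ∈ Icc (0 : ℝ) 1)
  (heq : ∀ x y : ℝ, 0 ≤ x → x < y → y ≤ 1 →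
    p x y = (1 / (y - x)) * ∫ t in x..y, p x t * p t y)

include hmeas hrange in
theorem integrableOn_Ioc_mul {a b : ℝ} (ha : 0 ≤ a) (hb : b ≤ 1) :
    IntegrableOn (fun s ↦ p a s * p s b) (Ioc a b) := by
  refine Measure.integrableOn_of_bounded (M := 1) measure_Ioc_lt_top.ne
    (hmeas.of_uncurry_left.mul hmeas.of_uncurry_right).aestronglyMeasurable ?_
  filter_upwards [ae_restrict_mem measurableSet_Ioc] with s hs
  obtain ⟨h₁, h₁'⟩ := hrange a s ha hs.1.le (hs.2.trans hb)
  obtain ⟨h₂, h₂'⟩ := hrange s b (ha.trans hs.1.le) hs.2 hb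
  rw [Real.norm_eq_abs, abs_of_nonneg (mul_nonneg h₁ h₂)]
  exact mul_le_one₀ h₁' h₂ h₂'

include hmeas hrange in
theorem intervalIntegrable_pow_mul {a b : ℝ} (ha : 0 ≤ a) (hab : a ≤ b) (hb : b ≤ 1)
    (k : ℕ) :
    IntervalIntegrable (fun s ↦ (s - a) ^ k * (p a s * p s b)) volume a b :=
  (intervalIntegrable_iff_integrableOn_Ioc_of_le hab).2 <|
    (integrableOn_Ioc_mul hmeas hrange ha hb).continuousOn_mul_of_subset
      (by fun_prop) isCompact_Icc measurableSet_Ioc Ioc_subset_Icc_self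

include heq in
theorem intervalIntegral_mul_eq_sub_mul {a b : ℝ} (ha : 0 ≤ a) (hab : a ≤ b) (hb : b ≤ 1) :
    ∫ t in a..b, p a t * p t b = (b - a) * p a b := by
  rcases hab.eq_or_lt with rfl | hab
  · simp
  · rw [heq a b ha hab hb]
    field_simp [sub_ne_zero.2 hab.ne']

include hmeas hrange in
theorem integrableOn_triangle_pow_mul {a b : ℝ} (ha : 0 ≤ a) (hb : b ≤ 1) (k : ℕ) :
    IntegrableOn (uncurry fun s t ↦ (s - a) ^ k * p a s * p s t * p t b)
      {q : ℝ × ℝ | a < q.1 ∧ q.1 ≤ q.2 ∧ q.2 ≤ b} := by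
  set T := {q : ℝ × ℝ | a < q.1 ∧ q.1 ≤ q.2 ∧ q.2 ≤ b}
  have hT : MeasurableSet T := by measurability
  have hsub : T ⊆ Icc a b ×ˢ Icc a b := fun q ⟨h₁, h₂, h₃⟩ ↦
    ⟨⟨h₁.le, h₂.trans h₃⟩, ⟨(h₁.trans_le h₂).le, h₃⟩⟩
  have hmeas' : Measurable fun q : ℝ × ℝ ↦ (q.1 - a) ^ k * p a q.1 * p q.1 q.2 * p q.2 b :=
    ((((measurable_fst.sub_const a).pow_const k).mul
      (hmeas.of_uncurry_left.comp measurable_fst)).mul hmeas).mul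
      (hmeas.of_uncurry_right.comp measurable_snd)
  refine Measure.integrableOn_of_bounded (M := 1)
    ((measure_mono hsub).trans_lt (isCompact_Icc.prod isCompact_Icc).measure_lt_top).ne
    hmeas'.aestronglyMeasurable (ae_restrict_of_forall_mem hT fun q ⟨h₁, h₂, h₃⟩ ↦ ?_)
  obtain ⟨hp₁, hp₁'⟩ := hrange a q.1 ha h₁.le (h₂.trans (h₃.trans hb))
  obtain ⟨hp₂, hp₂'⟩ := hrange q.1 q.2 (ha.trans h₁.le) h₂ (h₃.trans hb)
  obtain ⟨hp₃, hp₃'⟩ := hrange q.2 b (ha.trans (h₁.le.trans h₂)) h₃ hb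
  have hpow₀ : 0 ≤ (q.1 - a) ^ k := pow_nonneg (by linarith) k
  have hpow₁ : (q.1 - a) ^ k ≤ 1 := pow_le_one₀ (by linarith) (by linarith)
  rw [uncurry_def, Real.norm_eq_abs, abs_of_nonneg (by positivity)]
  exact mul_le_one₀ (mul_le_one₀ (mul_le_one₀ hpow₁ hp₁ hp₁') hp₂ hp₂') hp₃ hp₃'

include hmeas hrange heq in
theorem intervalIntegral_pow_mul_eq (k : ℕ) {a b : ℝ} (ha : 0 ≤ a) (hab : a ≤ b)
    (hb : b ≤ 1) :
    ∫ s in a..b, (s - a) ^ k * (p a s * p s b) = p a b * (b - a) ^ (k + 1) / (k + 1) := by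
  induction k generalizing b with
  | zero => simpa [mul_comm] using intervalIntegral_mul_eq_sub_mul heq ha hab hb
  | succ k ih =>
    set f : ℝ → ℝ → ℝ := fun s t ↦ (s - a) ^ k * p a s * p s t * p t b
    have hswap := intervalIntegral_intervalIntegral_swap_triangle hab
      (integrableOn_triangle_pow_mul hmeas hrange ha hb k)
    have hleft : ∫ t in a..b, ∫ s in a..t, f s t =
        (∫ s in a..b, (s - a) ^ (k + 1) * (p a s * p s b)) / (k + 1) := by
      rw [← intervalIntegral.integral_div]
      refine intervalIntegral.integral_congr fun t ht ↦ ?_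
      rw [uIcc_of_le hab] at ht
      calc ∫ s in a..t, f s t = (∫ s in a..t, (s - a) ^ k * (p a s * p s t)) * p t b := by
            rw [← intervalIntegral.integral_mul_const]
            exact intervalIntegral.integral_congr fun s _ ↦ by ring
        _ = (t - a) ^ (k + 1) * (p a t * p t b) / (k + 1) := by
            rw [ih ht.1 (ht.2.trans hb)]; ring
    have hright : ∫ s in a..b, ∫ t in s..b, f s t =
        (b - a) * (∫ s in a..b, (s - a) ^ k * (p a s * p s b)) -
          ∫ s in a..b, (s - a) ^ (k + 1) * (p a s * p s b) := by
      rw [← intervalIntegral.integral_const_mul, ← intervalIntegral.integral_sub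
        ((intervalIntegrable_pow_mul hmeas hrange ha hab hb k).const_mul _)
        (intervalIntegrable_pow_mul hmeas hrange ha hab hb (k + 1))]
      refine intervalIntegral.integral_congr fun s hs ↦ ?_
      rw [uIcc_of_le hab] at hs
      calc ∫ t in s..b, f s t = (s - a) ^ k * p a s * ∫ t in s..b, p s t * p t b := by
            rw [← intervalIntegral.integral_const_mul]
            exact intervalIntegral.integral_congr fun t _ ↦ by ring
        _ = _ := by
            rw [intervalIntegral_mul_eq_sub_mul heq (ha.trans hs.1) hs.2 hb]; ring
    rw [hleft, hright, ih hab hb] at hswap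
    push_cast
    field_simp at hswap ⊢
    linear_combination hswap

include hmeas hrange heq in
theorem ae_restrict_mul_eq {x z : ℝ} (hx : 0 ≤ x) (hxz : x ≤ z) (hz : z ≤ 1) :
    ∀ᵐ y ∂volume.restrict (Ioc x z), p x y * p y z = p x z := by
  have hint := integrableOn_Ioc_mul hmeas hrange hx hz
  have hmom (n : ℕ) : ∫ y in Ioc x z, (y - x) ^ n * (p x y * p y z - p x z) = 0 := by
    have hpow : ∫ y in x..z, (y - x) ^ n = (z - x) ^ (n + 1) / (n + 1) := by
      simp [intervalIntegral.integral_comp_sub_right (· ^ n) x, integral_pow]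
    simp_rw [mul_sub]
    rw [integral_sub ((intervalIntegrable_iff_integrableOn_Ioc_of_le hxz).1
        (intervalIntegrable_pow_mul hmeas hrange hx hxz hz n))
        (Continuous.integrableOn_Ioc (by fun_prop : Continuous fun y ↦ (y - x) ^ n * p x z)),
      ← intervalIntegral.integral_of_le hxz, ← intervalIntegral.integral_of_le hxz,
      intervalIntegral_pow_mul_eq hmeas hrange heq n hx hxz hz,
      intervalIntegral.integral_mul_const, hpow]
    ring
  filter_upwards [ae_eq_zero_of_moments (hint.sub (integrableOn_const (by simp))) hmom]
    with y hy
  exact sub_eq_zero.1 hy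

include hmeas hrange heq in
theorem ae_le_of_le_of_le {x z : ℝ} :
    ∀ᵐ y, 0 ≤ x → x ≤ y → y ≤ z → z ≤ 1 → p x z ≤ p x y := by
  by_cases h : 0 ≤ x ∧ x < z ∧ z ≤ 1
  swap
  · exact .of_forall fun y hx hxy hyz hz ↦ (show y = z by grind) ▸ le_rfl
  obtain ⟨hx, hxz, hz⟩ := h
  filter_upwards [(ae_restrict_iff' measurableSet_Ioc).1
    (ae_restrict_mul_eq hmeas hrange heq hx hxz.le hz), Measure.ae_ne volume x]
    with y hy hyx _ hxy hyz _
  obtain ⟨h₁, -⟩ := hrange x y hx hxy (hyz.trans hz)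
  obtain ⟨-, h₂⟩ := hrange y z (hx.trans hxy) hyz hz
  calc p x z = p x y * p y z := (hy ⟨hxy.lt_of_ne hyx.symm, hyz⟩).symm
    _ ≤ p x y := mul_le_of_le_one_right h₁ h₂
end

/-- Lemma: a measurable `p : {(x,y) : 0 ≤ x ≤ y ≤ 1} → [0,1]` satisfying
`p(x,y) = (1/(y−x)) ∫_x^y p(x,t) p(t,y) dt` is decreasing in `y` almost everywhere. -/
theorem stmt17 (p : ℝ → ℝ → ℝ) (hmeas : Measurable (Function.uncurry p))
    (hrange : ∀ x y : ℝ, 0 ≤ x → x ≤ y → y ≤ 1 → p x y ∈ Set.Icc (0:ℝ) 1)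
    (heq : ∀ x y : ℝ, 0 ≤ x → x < y → y ≤ 1 →
      p x y = (1 / (y - x)) * ∫ t in x..y, p x t * p t y) :
    ∀ᵐ q : ℝ × ℝ × ℝ ∂(MeasureTheory.volume : Measure (ℝ × ℝ × ℝ)),
      (0 ≤ q.1 ∧ q.1 ≤ q.2.1 ∧ q.2.1 ≤ q.2.2 ∧ q.2.2 ≤ 1) →
        p q.1 q.2.2 ≤ p q.1 q.2.1 := by
  rw [Measure.volume_eq_prod, Measure.ae_prod_iff_ae_ae (by measurability)]
  refine .of_forall fun x ↦ ?_
  rw [Measure.volume_eq_prod, Measure.ae_prod_iff_ae_ae (by measurability),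
    Measure.ae_ae_comm (by measurability)]
  exact .of_forall fun z ↦ (ae_le_of_le_of_le hmeas hrange heq).mono fun y h hq ↦
    h hq.1 hq.2.1 hq.2.2.1 hq.2.2.2
end
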